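/- Let Ω ⊆ ℂ be open and connected, and let H be the set of holomorphic functions in a C_K-vector space V of solutions of a homogeneous linear ODE of order n+1 in the differential field K = Frac(R), where R is the ring generated by holomorphic and anti-holomorphic functions on Ω and C_K is the field of fractions of anti-holomorphic functions. If f₁,…,f_k ∈ H are ℂ-linearly independent holomorphic functions, then they are linearly independent over C_K; consequently dim_ℂ H ≤ n+1. -/

import Mathlib

open Complex Set Metric



private lemma itd_analytic {Ω : Set ℂ} (hΩ : IsOpen Ω) {f : ℂ → ℂ}
    (hf : DifferentiableOn ℂ f Ω) (m : ℕ) :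
    AnalyticOnNhd ℂ (iteratedDeriv m f) Ω := by
  induction m with
  | zero => simpa [iteratedDeriv_zero] using hf.analyticOnNhd hΩ
  | succ m ih => rw [iteratedDeriv_succ]; exact ih.deriv

private lemma itd_diffOn {Ω : Set ℂ} (hΩ : IsOpen Ω) {f : ℂ → ℂ}
    (hf : DifferentiableOn ℂ f Ω) (m : ℕ) :
    DifferentiableOn ℂ (iteratedDeriv m f) Ω :=
  (itd_analytic hΩ hf m).differentiableOn

private lemma zero_of_itd_zero {Ω : Set ℂ} (hΩ : IsOpen Ω) (hc : IsPreconnected Ω)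
    {h : ℂ → ℂ} (hh : DifferentiableOn ℂ h Ω) {z₀ : ℂ} (hz₀ : z₀ ∈ Ω)
    (hd : ∀ m, iteratedDeriv m h z₀ = 0) : ∀ z ∈ Ω, h z = 0 := by
  obtain ⟨ε, hε, hball⟩ := Metric.isOpen_iff.1 hΩ z₀ hz₀
  have hev : h =ᶠ[nhds z₀] 0 := by
    filter_upwards [Metric.ball_mem_nhds z₀ hε] with z hz
    rw [Pi.zero_apply, ← taylorSeries_eq_on_ball' hz (hh.mono hball)]
    simp [hd]
  exact fun z hz =>
    (hh.analyticOnNhd hΩ).eqOn_zero_of_preconnected_of_eventuallyEq_zero hc hz₀ hev hz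


private lemma wirtinger_step {Ω : Set ℂ} (hΩ : IsOpen Ω) {k : ℕ}
    {b : Fin k → ℂ → ℂ} (hB : ∀ i, DifferentiableOn ℂ (fun z => (starRingEnd ℂ) (b i z)) Ω)
    {g : Fin k → ℂ → ℂ} (hg : ∀ i, DifferentiableOn ℂ (g i) Ω)
    (h0 : ∀ z ∈ Ω, ∑ i, b i z * g i z = 0) :
    ∀ z ∈ Ω, ∑ i, b i z * deriv (g i) z = 0 := by
  intro z hz
  set B : Fin k → ℂ → ℂ := fun i z => (starRingEnd ℂ) (b i z) with hBdef
  have hbB : ∀ i w, b i w = (starRingEnd ℂ) (B i w) := by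
    intro i w; simp [hBdef]
  have hnz : Ω ∈ nhds z := hΩ.mem_nhds hz
  have hBd : ∀ i, HasDerivAt (B i) (deriv (B i) z) z :=
    fun i => ((hB i).differentiableAt hnz).hasDerivAt
  have hgd : ∀ i, HasDerivAt (g i) (deriv (g i) z) z :=
    fun i => ((hg i).differentiableAt hnz).hasDerivAt
  set bi' : Fin k → ℂ := fun i => deriv (B i) z
  set gi' : Fin k → ℂ := fun i => deriv (g i) z
  -- fderivs over ℝ
  have hconjB : ∀ i, HasFDerivAt (fun w => (starRingEnd ℂ) (B i w))
      ((Complex.conjCLE.toContinuousLinearMap).comp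
        (((ContinuousLinearMap.smulRight (1 : ℂ →L[ℂ] ℂ) (bi' i))).restrictScalars ℝ)) z := by
    intro i
    exact (Complex.conjCLE.toContinuousLinearMap.hasFDerivAt).comp z
      (((hBd i).hasFDerivAt).restrictScalars ℝ)
  have hgR : ∀ i, HasFDerivAt (g i)
      (((ContinuousLinearMap.smulRight (1 : ℂ →L[ℂ] ℂ) (gi' i))).restrictScalars ℝ) z :=
    fun i => ((hgd i).hasFDerivAt).restrictScalars ℝ
  set L : ℂ →L[ℝ] ℂ := ∑ i, ((starRingEnd ℂ) (B i z) •
        (((ContinuousLinearMap.smulRight (1 : ℂ →L[ℂ] ℂ) (gi' i))).restrictScalars ℝ)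
      + g i z • ((Complex.conjCLE.toContinuousLinearMap).comp
        (((ContinuousLinearMap.smulRight (1 : ℂ →L[ℂ] ℂ) (bi' i))).restrictScalars ℝ))) with hLdef
  have hL : HasFDerivAt (fun w => ∑ i, (starRingEnd ℂ) (B i w) * g i w) L z := by
    rw [hLdef]
    exact HasFDerivAt.fun_sum fun i _ => (hconjB i).mul (hgR i)
  have hev : (fun w => ∑ i, (starRingEnd ℂ) (B i w) * g i w) =ᶠ[nhds z] (fun _ => (0:ℂ)) := by
    filter_upwards [hnz] with w hw
    rw [← h0 w hw]
    exact Finset.sum_congr rfl fun i _ => by rw [hbB]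
  have hL0 : HasFDerivAt (fun _ : ℂ => (0:ℂ)) L z := hL.congr_of_eventuallyEq hev.symm
  have hLz : L = 0 := hL0.unique (hasFDerivAt_const 0 z)
  have happ : ∀ v : ℂ, ∑ i, ((starRingEnd ℂ) (B i z) * (v * gi' i)
      + g i z * (starRingEnd ℂ) (v * bi' i)) = 0 := by
    intro v
    have := congrArg (fun (M : ℂ →L[ℝ] ℂ) => M v) hLz
    simpa [L, ContinuousLinearMap.sum_apply, smul_eq_mul, mul_comm] using this
  have e1 := happ 1
  have e2 := happ Complex.I
  set P : ℂ := ∑ i, (starRingEnd ℂ) (B i z) * gi' i with hP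
  set Q : ℂ := ∑ i, g i z * (starRingEnd ℂ) (bi' i) with hQ
  have he1 : P + Q = 0 := by
    rw [hP, hQ, ← Finset.sum_add_distrib, ← e1]
    exact Finset.sum_congr rfl fun i _ => by ring_nf
  have he2 : Complex.I * P - Complex.I * Q = 0 := by
    rw [hP, hQ, Finset.mul_sum, Finset.mul_sum, ← Finset.sum_sub_distrib, ← e2]
    refine Finset.sum_congr rfl fun i _ => ?_
    rw [map_mul, Complex.conj_I]
    ring
  have hPQ : P - Q = 0 := by
    have : Complex.I * (P - Q) = 0 := by rw [mul_sub]; exact he2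
    rcases mul_eq_zero.1 this with h | h
    · exact absurd h Complex.I_ne_zero
    · exact h
  have hP0 : P = 0 := by
    have : (2:ℂ) * P = 0 := by linear_combination he1 + hPQ
    rcases mul_eq_zero.1 this with h | h
    · norm_num at h
    · exact h
  calc ∑ i, b i z * deriv (g i) z = P := by
        rw [hP]; exact Finset.sum_congr rfl fun i _ => by rw [hbB]
    _ = 0 := hP0

private lemma wirtinger_iter {Ω : Set ℂ} (hΩ : IsOpen Ω) {k : ℕ}
    {b : Fin k → ℂ → ℂ} (hB : ∀ i, DifferentiableOn ℂ (fun z => (starRingEnd ℂ) (b i z)) Ω)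
    {f : Fin k → ℂ → ℂ} (hf : ∀ i, DifferentiableOn ℂ (f i) Ω)
    (h0 : ∀ z ∈ Ω, ∑ i, b i z * f i z = 0) (m : ℕ) :
    ∀ z ∈ Ω, ∑ i, b i z * iteratedDeriv m (f i) z = 0 := by
  induction m with
  | zero => simpa [iteratedDeriv_zero] using h0
  | succ m ih =>
    have hd : ∀ i, DifferentiableOn ℂ (iteratedDeriv m (f i)) Ω :=
      fun i => ((itd_analytic hΩ (hf i) m)).differentiableOn
    have := wirtinger_step hΩ hB hd ih
    intro z hz
    simpa [iteratedDeriv_succ] using this z hz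

private lemma itd_sum {Ω : Set ℂ} (hΩ : IsOpen Ω) {k : ℕ} {f : Fin k → ℂ → ℂ}
    (hf : ∀ i, DifferentiableOn ℂ (f i) Ω) (c : Fin k → ℂ) (m : ℕ) :
    ∀ z ∈ Ω, iteratedDeriv m (fun w => ∑ i, c i * f i w) z
      = ∑ i, c i * iteratedDeriv m (f i) z := by
  induction m with
  | zero => simp
  | succ m ih =>
    intro z hz
    have hev : iteratedDeriv m (fun w => ∑ i, c i * f i w) =ᶠ[nhds z]
        (fun w => ∑ i, c i * iteratedDeriv m (f i) w) := by
      filter_upwards [hΩ.mem_nhds hz] with w hw using ih w hw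
    have hdi : ∀ i ∈ Finset.univ, DifferentiableAt ℂ
        (fun w => c i * iteratedDeriv m (f i) w) z := fun i _ =>
      (((itd_analytic hΩ (hf i) m).differentiableOn).differentiableAt
        (hΩ.mem_nhds hz)).const_mul _
    rw [iteratedDeriv_succ, hev.deriv_eq, deriv_fun_sum hdi]
    refine Finset.sum_congr rfl fun i _ => ?_
    rw [deriv_const_mul _ (((itd_analytic hΩ (hf i) m).differentiableOn).differentiableAt
      (hΩ.mem_nhds hz)), ← iteratedDeriv_succ]

private lemma part1 {Ω : Set ℂ} (hΩ : IsOpen Ω) (hc : IsPreconnected Ω) {k : ℕ}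
    {f : Fin k → ℂ → ℂ} (hf : ∀ i, DifferentiableOn ℂ (f i) Ω)
    (hind : ∀ c : Fin k → ℂ, (∀ z ∈ Ω, ∑ i, c i * f i z = 0) → ∀ i, c i = 0)
    (b : Fin k → ℂ → ℂ) (hB : ∀ i, DifferentiableOn ℂ (fun z => (starRingEnd ℂ) (b i z)) Ω)
    (h0 : ∀ z ∈ Ω, ∑ i, b i z * f i z = 0) : ∀ i, ∀ z ∈ Ω, b i z = 0 := by
  intro i z₀ hz₀
  have hiter := wirtinger_iter hΩ hB hf h0
  have hdiff : DifferentiableOn ℂ (fun w => ∑ j, b j z₀ * f j w) Ω := by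
    apply DifferentiableOn.fun_sum
    exact fun j _ => (hf j).const_mul _
  have key : ∀ z ∈ Ω, ∑ j, b j z₀ * f j z = 0 :=
    zero_of_itd_zero hΩ hc hdiff hz₀
      (fun m => by rw [itd_sum hΩ hf _ m z₀ hz₀]; exact hiter m z₀ hz₀)
  exact hind (fun j => b j z₀) key i


private lemma itd_diffOn' {Ω : Set ℂ} (hΩ : IsOpen Ω) {f : ℂ → ℂ}
    (hf : DifferentiableOn ℂ f Ω) (m : ℕ) :
    DifferentiableOn ℂ (iteratedDeriv m f) Ω := by
  induction m with
  | zero => simpa [iteratedDeriv_zero] using hf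
  | succ m ih =>
    rw [iteratedDeriv_succ]
    exact ((ih.analyticOnNhd hΩ).deriv).differentiableOn

private lemma det_diffOn {s : Set ℂ} {m : ℕ} {M : ℂ → Matrix (Fin m) (Fin m) ℂ}
    (h : ∀ p q, DifferentiableOn ℂ (fun z => M z p q) s) :
    DifferentiableOn ℂ (fun z => (M z).det) s := by
  have : (fun z => (M z).det)
      = fun z => ∑ σ : Equiv.Perm (Fin m), ((Equiv.Perm.sign σ : ℤ) : ℂ) * ∏ i, M z (σ i) i := by
    funext z; rw [Matrix.det_apply']
  rw [this]
  refine DifferentiableOn.fun_sum fun σ _ => DifferentiableOn.const_mul ?_ _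
  exact DifferentiableOn.fun_finsetProd fun i _ => h (σ i) i

private lemma mulVec_inj {m : ℕ} {N : Matrix (Fin m) (Fin m) ℂ} (hdet : N.det ≠ 0)
    {x : Fin m → ℂ} (hx : N.mulVec x = 0) : x = 0 := by
  have hu : IsUnit N.det := isUnit_iff_ne_zero.mpr hdet
  calc x = (1 : Matrix (Fin m) (Fin m) ℂ).mulVec x := (Matrix.one_mulVec x).symm
    _ = (N⁻¹ * N).mulVec x := by rw [Matrix.nonsing_inv_mul N hu]
    _ = N⁻¹.mulVec (N.mulVec x) := (Matrix.mulVec_mulVec x N⁻¹ N).symm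
    _ = 0 := by rw [hx, Matrix.mulVec_zero]

private lemma exists_jets_indep {Ω : Set ℂ} (hΩ : IsOpen Ω) (hc : IsPreconnected Ω)
    (hne : Ω.Nonempty) :
    ∀ (r : ℕ) (g : Fin r → ℂ → ℂ), (∀ j, DifferentiableOn ℂ (g j) Ω) →
      (∀ c : Fin r → ℂ, (∀ z ∈ Ω, ∑ j, c j * g j z = 0) → ∀ j, c j = 0) →
      ∃ z ∈ Ω, LinearIndependent ℂ
        (fun j : Fin r => (fun i : Fin r => iteratedDeriv (i : ℕ) (g j) z)) := by
  intro r
  induction r with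
  | zero =>
    intro g _ _
    obtain ⟨z, hz⟩ := hne
    exact ⟨z, hz, linearIndependent_empty_type⟩
  | succ r IH =>
    intro g hg hind
    have hg'd : ∀ j : Fin r, DifferentiableOn ℂ (g j.castSucc) Ω := fun j => hg _
    have hind' : ∀ c : Fin r → ℂ, (∀ z ∈ Ω, ∑ j, c j * g j.castSucc z = 0) → ∀ j, c j = 0 := by
      intro c hcz j
      have h1 : ∀ z ∈ Ω, ∑ j' : Fin (r+1), (Fin.snoc c 0 : Fin (r+1) → ℂ) j' * g j' z = 0 := by
        intro z hz
        rw [Fin.sum_univ_castSucc]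
        simp only [Fin.snoc_castSucc, Fin.snoc_last, zero_mul, add_zero]
        exact hcz z hz
      have := hind _ h1 j.castSucc
      simpa using this
    obtain ⟨z₀, hz₀, hli⟩ := IH (fun j => g j.castSucc) hg'd hind'
    by_contra hcon
    push_neg at hcon
    set N : ℂ → Matrix (Fin r) (Fin r) ℂ :=
      fun z i j => iteratedDeriv (i : ℕ) (g j.castSucc) z with hN
    have hNent : ∀ p q : Fin r, DifferentiableOn ℂ (fun z => N z p q) Ω :=
      fun p q => itd_diffOn' hΩ (hg _) _
    have hdet0 : (N z₀).det ≠ 0 := by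
      have hli' : LinearIndependent ℂ (fun j => (N z₀).transpose j) := hli
      have := Matrix.linearIndependent_cols_iff_isUnit.mp hli'
      exact isUnit_iff_ne_zero.mp ((Matrix.isUnit_iff_isUnit_det _).mp this)
    have hdetDiff : DifferentiableOn ℂ (fun z => (N z).det) Ω := det_diffOn hNent
    have hca : ContinuousAt (fun z => (N z).det) z₀ :=
      (hdetDiff.continuousOn).continuousAt (hΩ.mem_nhds hz₀)
    have h1 : ∀ᶠ u in nhds z₀, u ∈ Ω := hΩ.mem_nhds hz₀
    have h2 : ∀ᶠ u in nhds z₀, (N u).det ≠ 0 := hca.eventually_ne hdet0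
    obtain ⟨ε, hε, hball⟩ := Metric.eventually_nhds_iff_ball.mp (h1.and h2)
    set Bs : Set ℂ := ball z₀ ε with hBs
    have hBsub : Bs ⊆ Ω := fun z hz => (hball z hz).1
    have hdetB : ∀ z ∈ Bs, (N z).det ≠ 0 := fun z hz => (hball z hz).2
    have hz₀B : z₀ ∈ Bs := mem_ball_self hε
    set w : ℂ → Fin r → ℂ := fun z i => iteratedDeriv (i : ℕ) (g (Fin.last r)) z with hw
    set cf : ℂ → Fin r → ℂ := fun z j => ((N z).det)⁻¹ * Matrix.cramer (N z) (w z) j with hcf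
    have E1 : ∀ z ∈ Bs, (N z).mulVec (cf z) = w z := by
      intro z hz
      have hcz : cf z = ((N z).det)⁻¹ • (Matrix.cramer (N z) (w z)) := by
        funext j; simp [hcf, smul_eq_mul]
      rw [hcz, Matrix.mulVec_smul, Matrix.mulVec_cramer, smul_smul,
        inv_mul_cancel₀ (hdetB z hz), one_smul]
    have E1r : ∀ z ∈ Bs, ∀ i : Fin r,
        ∑ j, cf z j * iteratedDeriv (i : ℕ) (g j.castSucc) z
          = iteratedDeriv (i : ℕ) (g (Fin.last r)) z := by
      intro z hz i
      have h : ∑ j, N z i j * cf z j = w z i := congrFun (E1 z hz) i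
      calc ∑ j, cf z j * iteratedDeriv (i : ℕ) (g j.castSucc) z
          = ∑ j, N z i j * cf z j := Finset.sum_congr rfl fun j _ => mul_comm _ _
        _ = w z i := h
        _ = iteratedDeriv (i : ℕ) (g (Fin.last r)) z := rfl
    have hdep : ∀ z ∈ Ω, ∃ d : Fin (r+1) → ℂ,
        (∑ j, d j • (fun i : Fin (r+1) => iteratedDeriv (i : ℕ) (g j) z)) = 0 ∧ ∃ j, d j ≠ 0 :=
      fun z hz => Fintype.not_linearIndependent_iff.mp (hcon z hz)
    have E2 : ∀ z ∈ Bs, ∑ j : Fin r, cf z j * iteratedDeriv r (g j.castSucc) z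
        = iteratedDeriv r (g (Fin.last r)) z := by
      intro z hz
      obtain ⟨d, hdsum, j₀, hj₀⟩ := hdep z (hBsub hz)
      have hrow : ∀ i : Fin (r+1), ∑ j, d j * iteratedDeriv (i : ℕ) (g j) z = 0 := by
        intro i
        have h := congrFun hdsum i
        simpa [Finset.sum_apply] using h
      have hdlast : d (Fin.last r) ≠ 0 := by
        intro h0
        have hvec : (N z).mulVec (fun j => d j.castSucc) = 0 := by
          funext i
          have h := hrow i.castSucc
          rw [Fin.sum_univ_castSucc] at h
          simp only [Fin.coe_castSucc, h0, zero_mul, add_zero] at h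
          show ∑ j, N z i j * d j.castSucc = 0
          rw [← h]
          exact Finset.sum_congr rfl fun j _ => mul_comm _ _
        have hall := mulVec_inj (hdetB z hz) hvec
        refine hj₀ ?_
        refine Fin.lastCases ?_ (fun j => ?_) j₀
        · exact h0
        · exact congrFun hall j
      set e : Fin r → ℂ := fun j => -(d j.castSucc) / d (Fin.last r) with he_def
      have he : ∀ i : Fin (r+1), iteratedDeriv (i : ℕ) (g (Fin.last r)) z
          = ∑ j, e j * iteratedDeriv (i : ℕ) (g j.castSucc) z := by
        intro i
        have h := hrow i
        rw [Fin.sum_univ_castSucc] at h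
        apply mul_left_cancel₀ hdlast
        rw [Finset.mul_sum]
        have : ∀ j : Fin r, d (Fin.last r) * (e j * iteratedDeriv (i : ℕ) (g j.castSucc) z)
            = -(d j.castSucc * iteratedDeriv (i : ℕ) (g j.castSucc) z) := by
          intro j
          rw [he_def]
          field_simp
        rw [Finset.sum_congr rfl fun j _ => this j, Finset.sum_neg_distrib]
        linear_combination h
      have hNe : (N z).mulVec e = w z := by
        funext i
        have h := he i.castSucc
        simp only [Fin.coe_castSucc] at h
        show ∑ j, N z i j * e j = w z i
        calc ∑ j, N z i j * e j = ∑ j, e j * iteratedDeriv (i : ℕ) (g j.castSucc) z :=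
              Finset.sum_congr rfl fun j _ => mul_comm _ _
          _ = iteratedDeriv (i : ℕ) (g (Fin.last r)) z := h.symm
          _ = w z i := rfl
      have hec : e = cf z := by
        have hsub : (N z).mulVec (e - cf z) = 0 := by
          rw [Matrix.mulVec_sub, hNe, E1 z hz, sub_self]
        have h := mulVec_inj (hdetB z hz) hsub
        funext j
        have := congrFun h j
        simpa [sub_eq_zero] using this
      have h := he (Fin.last r)
      rw [Fin.val_last] at h
      rw [h]
      exact Finset.sum_congr rfl fun j _ => by rw [← hec]
    have E12 : ∀ i : ℕ, i ≤ r → ∀ z ∈ Bs,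
        ∑ j, cf z j * iteratedDeriv i (g j.castSucc) z
          = iteratedDeriv i (g (Fin.last r)) z := by
      intro i hi z hz
      rcases lt_or_eq_of_le hi with hlt | heq
      · exact E1r z hz ⟨i, hlt⟩
      · subst heq; exact E2 z hz
    have hcfd : ∀ j, DifferentiableOn ℂ (fun z => cf z j) Bs := by
      intro j
      apply DifferentiableOn.mul
      · exact ((det_diffOn hNent).mono hBsub).inv (fun z hz => hdetB z hz)
      · have hrw : (fun z => Matrix.cramer (N z) (w z) j)
            = fun z => ((N z).updateCol j (w z)).det := by
          funext z; rw [Matrix.cramer_apply]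
        rw [hrw]
        apply det_diffOn
        intro p q
        by_cases hq : q = j
        · have : (fun z => ((N z).updateCol j (w z)) p q) = fun z => w z p := by
            funext z; rw [Matrix.updateCol_apply, if_pos hq]
          rw [this]
          exact (itd_diffOn' hΩ (hg _) _).mono hBsub
        · have : (fun z => ((N z).updateCol j (w z)) p q) = fun z => N z p q := by
            funext z; rw [Matrix.updateCol_apply, if_neg hq]
          rw [this]
          exact (hNent p q).mono hBsub
    have hBop : IsOpen Bs := isOpen_ball
    have hgAt : ∀ (m : ℕ) (j : Fin (r+1)) z, z ∈ Bs →
        DifferentiableAt ℂ (iteratedDeriv m (g j)) z := fun m j z hz =>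
      (itd_diffOn' hΩ (hg j) m).differentiableAt (hΩ.mem_nhds (hBsub hz))
    have E3 : ∀ z ∈ Bs, ∀ i : Fin r,
        ∑ j, deriv (fun u => cf u j) z * iteratedDeriv (i : ℕ) (g j.castSucc) z = 0 := by
      intro z hz i
      have hnz : Bs ∈ nhds z := hBop.mem_nhds hz
      have hdAt : ∀ j, DifferentiableAt ℂ (fun u => cf u j) z :=
        fun j => (hcfd j).differentiableAt hnz
      have hFev : (fun u => ∑ j, cf u j * iteratedDeriv (i : ℕ) (g j.castSucc) u)
          =ᶠ[nhds z] (iteratedDeriv (i : ℕ) (g (Fin.last r))) := by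
        filter_upwards [hnz] with u hu using E12 i (le_of_lt i.isLt) u hu
      have hder := hFev.deriv_eq
      rw [deriv_fun_sum (fun j _ => (hdAt j).fun_mul (hgAt (i : ℕ) j.castSucc z hz))] at hder
      have hterm : ∀ j : Fin r, deriv (fun u => cf u j * iteratedDeriv (i : ℕ) (g j.castSucc) u) z
          = deriv (fun u => cf u j) z * iteratedDeriv (i : ℕ) (g j.castSucc) z
            + cf z j * iteratedDeriv ((i : ℕ)+1) (g j.castSucc) z := by
        intro j
        rw [deriv_fun_mul (hdAt j) (hgAt (i : ℕ) j.castSucc z hz), ← iteratedDeriv_succ]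
      rw [Finset.sum_congr rfl fun j _ => hterm j, Finset.sum_add_distrib] at hder
      have hnext : ∑ j, cf z j * iteratedDeriv ((i : ℕ)+1) (g j.castSucc) z
          = iteratedDeriv ((i : ℕ)+1) (g (Fin.last r)) z := E12 ((i : ℕ)+1) i.isLt z hz
      have hlast : deriv (iteratedDeriv (i : ℕ) (g (Fin.last r))) z
          = iteratedDeriv ((i : ℕ)+1) (g (Fin.last r)) z :=
        (congrFun (iteratedDeriv_succ (n := (i : ℕ))) z).symm
      rw [hnext, hlast] at hder
      linear_combination hder
    have hderiv0 : ∀ z ∈ Bs, ∀ j, deriv (fun u => cf u j) z = 0 := by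
      intro z hz
      have hvec : (N z).mulVec (fun j => deriv (fun u => cf u j) z) = 0 := by
        funext i
        show ∑ j, N z i j * deriv (fun u => cf u j) z = 0
        rw [← E3 z hz i]
        exact Finset.sum_congr rfl fun j _ => mul_comm _ _
      exact fun j => congrFun (mulVec_inj (hdetB z hz) hvec) j
    have hconst : ∀ z ∈ Bs, ∀ j, cf z j = cf z₀ j := by
      intro z hz j
      refine Convex.is_const_of_fderivWithin_eq_zero (convex_ball z₀ ε) (hcfd j) ?_ hz hz₀B
      intro x hx
      rw [fderivWithin_of_isOpen hBop hx]
      have hdx : HasDerivAt (fun u => cf u j) 0 x := by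
        have h := ((hcfd j).differentiableAt (hBop.mem_nhds hx)).hasDerivAt
        rwa [hderiv0 x hx j] at h
      have := hdx.hasFDerivAt.fderiv
      rw [this]
      ext
      simp
    have h0B : ∀ z ∈ Bs, g (Fin.last r) z - ∑ j, cf z₀ j * g j.castSucc z = 0 := by
      intro z hz
      have h := E12 0 (Nat.zero_le r) z hz
      simp only [iteratedDeriv_zero] at h
      rw [sub_eq_zero, ← h]
      exact Finset.sum_congr rfl fun j _ => by rw [hconst z hz j]
    have hhd : DifferentiableOn ℂ (fun z => g (Fin.last r) z - ∑ j, cf z₀ j * g j.castSucc z) Ω := by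
      apply DifferentiableOn.sub (hg _)
      exact DifferentiableOn.fun_sum fun j _ => (hg _).const_mul _
    have hev0 : (fun z => g (Fin.last r) z - ∑ j, cf z₀ j * g j.castSucc z) =ᶠ[nhds z₀] 0 := by
      filter_upwards [hBop.mem_nhds hz₀B] with u hu using h0B u hu
    have hzero := (hhd.analyticOnNhd hΩ).eqOn_zero_of_preconnected_of_eventuallyEq_zero hc hz₀ hev0
    have hfinal : ∀ z ∈ Ω, ∑ j : Fin (r+1),
        (Fin.snoc (fun j => -(cf z₀ j)) 1 : Fin (r+1) → ℂ) j * g j z = 0 := by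
      intro z hz
      rw [Fin.sum_univ_castSucc]
      simp only [Fin.snoc_castSucc, Fin.snoc_last, one_mul]
      have h := hzero hz
      simp only [Pi.zero_apply] at h
      have h' : g (Fin.last r) z - ∑ j, cf z₀ j * g j.castSucc z = 0 := h
      calc ∑ j : Fin r, -(cf z₀ j) * g j.castSucc z + g (Fin.last r) z
          = g (Fin.last r) z - ∑ j, cf z₀ j * g j.castSucc z := by
            rw [Finset.sum_congr rfl fun j _ => neg_mul (cf z₀ j) (g j.castSucc z),
              Finset.sum_neg_distrib]
            ring
        _ = 0 := h'
    have h1 := hind _ hfinal (Fin.last r)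
    simp only [Fin.snoc_last] at h1
    exact one_ne_zero h1


/-- Holomorphic solutions on a connected open `Ω ⊆ ℂ` of a common homogeneous linear ODE of
order `n+1` (with nowhere-vanishing top coefficient) which are linearly independent over `ℂ`
are also linearly independent over the constant field of anti-holomorphic coefficients;
consequently there are at most `n+1` of them: `dim_ℂ H ≤ n+1`. -/
theorem holomorphic_solutions_dim_le (Ω : Set ℂ) (hΩ : IsOpen Ω) (hc : IsConnected Ω)
    (n k : ℕ) (a : Fin (n + 2) → ℂ → ℂ)
    (htop : ∀ z ∈ Ω, a (Fin.last (n + 1)) z ≠ 0)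
    (f : Fin k → ℂ → ℂ) (hf : ∀ i, DifferentiableOn ℂ (f i) Ω)
    (hsol : ∀ i, ∀ z ∈ Ω, ∑ m : Fin (n + 2), a m z * iteratedDeriv (m : ℕ) (f i) z = 0)
    (hind : ∀ c : Fin k → ℂ, (∀ z ∈ Ω, ∑ i, c i * f i z = 0) → ∀ i, c i = 0) :
    (∀ b : Fin k → ℂ → ℂ,
        (∀ i, DifferentiableOn ℂ (fun z => (starRingEnd ℂ) (b i z)) Ω) →
        (∀ z ∈ Ω, ∑ i, b i z * f i z = 0) → ∀ i, ∀ z ∈ Ω, b i z = 0)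
      ∧ k ≤ n + 1 := by
  constructor
  · intro b hB h0
    exact part1 hΩ hc.isPreconnected hf hind b hB h0
  · by_contra hk
    push_neg at hk
    have hk2 : n + 2 ≤ k := hk
    set e : Fin (n + 2) → Fin k := Fin.castLE hk2 with he
    have hinj : Function.Injective e := Fin.castLE_injective hk2
    set g : Fin (n + 2) → ℂ → ℂ := fun j => f (e j) with hg
    have hgd : ∀ j, DifferentiableOn ℂ (g j) Ω := fun j => hf _
    have hindg : ∀ c : Fin (n + 2) → ℂ, (∀ z ∈ Ω, ∑ j, c j * g j z = 0) → ∀ j, c j = 0 := by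
      intro c hcz j
      set c' : Fin k → ℂ := Function.extend e c 0 with hc'
      have hsum : ∀ z ∈ Ω, ∑ i, c' i * f i z = 0 := by
        intro z hz
        have hzero : ∀ i ∈ Finset.univ, i ∉ Finset.univ.image e → c' i * f i z = 0 := by
          intro i _ hi
          have : ¬∃ j', e j' = i := by
            intro ⟨j', hj'⟩; exact hi (Finset.mem_image.mpr ⟨j', Finset.mem_univ _, hj'⟩)
          rw [hc', Function.extend_apply' _ _ _ this]
          simp
        rw [← Finset.sum_subset (Finset.subset_univ _) hzero,
          Finset.sum_image (fun x _ y _ h => hinj h)]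
        rw [← hcz z hz]
        refine Finset.sum_congr rfl fun j' _ => ?_
        rw [hc', hinj.extend_apply]
      have h := hind c' hsum (e j)
      rwa [hc', hinj.extend_apply] at h
    obtain ⟨z₁, hz₁, hjets⟩ :=
      exists_jets_indep hΩ hc.isPreconnected hc.nonempty (n + 2) g hgd hindg
    -- the jets span everything
    have hcard : Fintype.card (Fin (n + 2)) = Module.finrank ℂ (Fin (n + 2) → ℂ) := by simp
    have hspan := hjets.span_eq_top_of_card_eq_finrank hcard
    -- the linear functional given by the ODE coefficients kills all jets
    let φ : (Fin (n + 2) → ℂ) →ₗ[ℂ] ℂ :=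
      { toFun := fun v => ∑ m, a m z₁ * v m
        map_add' := by
          intro v w'
          simp [mul_add, Finset.sum_add_distrib]
        map_smul' := by
          intro t v
          simp only [Pi.smul_apply, smul_eq_mul, RingHom.id_apply, Finset.mul_sum]
          exact Finset.sum_congr rfl fun m _ => by ring }
    have hkill : ∀ j, φ (fun i : Fin (n + 2) => iteratedDeriv (i : ℕ) (g j) z₁) = 0 := by
      intro j
      exact hsol (e j) z₁ hz₁
    have hφ0 : ∀ v, φ v = 0 := by
      intro v
      have hv : v ∈ Submodule.span ℂ
          (Set.range fun j : Fin (n + 2) => (fun i : Fin (n + 2) => iteratedDeriv (i : ℕ) (g j) z₁)) := by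
        rw [hspan]; trivial
      refine Submodule.span_induction ?_ ?_ ?_ ?_ hv
      · rintro x ⟨j, rfl⟩; exact hkill j
      · simp
      · intro x y _ _ hx hy; rw [map_add, hx, hy, add_zero]
      · intro t x _ hx; rw [map_smul, hx, smul_zero]
    have hlastv := hφ0 (Pi.single (Fin.last (n + 1)) 1)
    have : a (Fin.last (n + 1)) z₁ = 0 := by
      simp only [φ, LinearMap.coe_mk, AddHom.coe_mk] at hlastv
      simpa [Pi.single_apply, mul_ite, Finset.sum_ite_eq'] using hlastv
    exact htop z₁ hz₁ this
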